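/- arXiv:2204.07393 — 3 statements merged into one kernel-verified Lean document; each statement's English description precedes it below -/
import Mathlib

section
/- Let A₀ be a non-unital associative algebra over a field of characteristic 0, and suppose A₀ is generated (as a non-unital associative algebra) by a Lie subalgebra 𝔥 ⊆ A₀ that is finite-dimensional and nilpotent as a Lie algebra. If every element of 𝔥 is nilpotent in A₀, then A₀ is nilpotent, i.e., there exists d ∈ ℕ such that every product of d elements of A₀ is zero. -/
/-- `mulPow a n` is the `(n+1)`-st power of `a` in a (possibly non-unital) magma. -/
def mulPow {A : Type*} [Mul A] (a : A) : ℕ → A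
  | 0 => a
  | n + 1 => mulPow a n * a

/-- `mulList a l` is the product of `a` with the elements of `l`, in order. -/
def mulList {A : Type*} [Mul A] (a : A) : List A → A
  | [] => a
  | b :: l => mulList (a * b) l

/-- The lower central series of a Lie subalgebra `𝔥` (a submodule closed under the
commutator bracket) of a non-unital associative algebra, defined via the commutator
`⁅a, b⁆ = a * b - b * a`. -/
def lcs {k A : Type*} [Field k] [NonUnitalRing A] [Module k A]
    (𝔥 : Submodule k A) : ℕ → Submodule k A
  | 0 => 𝔥
  | n + 1 => Submodule.span k {x | ∃ a ∈ 𝔥, ∃ b ∈ lcs 𝔥 n, x = a * b - b * a}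

/-!
Work in the unitization of `A₀`. Choose a finite spanning family of each `lcs 𝔥 i` and give its
members weight `i + 1`: the commutator of letters of weights `p` and `q` is then a combination of
letters of weight `p + q`. Order the letters compatibly with weight. Inserting a letter `a` into a
sorted word `b s` with `b < a` uses `a b s = b (a s) + [a, b] s`; the letters of `[a, b]` outweigh
`a`, hence lie above `b`, so both terms reduce to inserting a letter into the shorter word `s`.
Thus every word is a combination of sorted words of no smaller weight. If `a ^ Dₐ = 0` for every
letter `a`, a sorted word of weight above `∑ₐ Dₐ wₐ` contains a block `a ^ Dₐ` and vanishes; as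
every weight is at least `1`, all sufficiently long words vanish.
-/

open Submodule Set

theorem List.Pairwise.eq_filter_append_replicate_append {L : Type*} [LinearOrder L]
    {ℓ : List L} (hℓ : ℓ.Pairwise (· ≤ ·)) (x : L) :
    ℓ = ℓ.filter (· < x) ++ List.replicate (ℓ.count x) x ++ ℓ.filter (x < ·) := by
  refine List.Perm.eq_of_pairwise' hℓ ?_ (List.perm_iff_count.2 fun y => ?_)
  · simp only [List.pairwise_append, List.pairwise_replicate, le_refl, or_true, true_and,
      List.mem_filter, List.mem_replicate, decide_eq_true_eq, List.mem_append]
    exact ⟨⟨hℓ.filter _, by grind⟩, hℓ.filter _, by grind⟩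
  · have count_filter_of_false {p : L → Bool} (hp : p y = false) : (ℓ.filter p).count y = 0 :=
      List.count_eq_zero.2 fun hy => by simp [hp] at hy
    rcases lt_trichotomy y x with h | rfl | h
    · simp [List.count_filter, count_filter_of_false, List.count_replicate, h, h.ne', h.not_gt]
    · simp [count_filter_of_false]
    · simp [List.count_filter, count_filter_of_false, List.count_replicate, h, h.ne, h.not_gt]

section SortedSpan

variable {k B L : Type*} [CommSemiring k] [Semiring B] [Algebra k B] [LinearOrder L]
  {ε : L → B} {w : L → ℕ}

variable (k ε w) in
def sortedSpan (n : ℕ) (β : L) : Submodule k B :=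
  span k {x | ∃ ℓ : List L, ℓ.Pairwise (· ≤ ·) ∧ (∀ a ∈ ℓ, β ≤ a) ∧ n ≤ (ℓ.map w).sum ∧
    (ℓ.map ε).prod = x}

theorem sortedSpan_anti {n n' : ℕ} {β β' : L} (hn : n ≤ n') (hβ : β ≤ β') :
    sortedSpan k ε w n' β' ≤ sortedSpan k ε w n β :=
  span_mono fun _ ⟨ℓ, hs, hβ', hn', hx⟩ =>
    ⟨ℓ, hs, fun a ha => hβ.trans (hβ' a ha), hn.trans hn', hx⟩

theorem mul_mem_sortedSpan_self {n : ℕ} {b : L} {x : B} (hx : x ∈ sortedSpan k ε w n b) :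
    ε b * x ∈ sortedSpan k ε w (w b + n) b := by
  induction hx using span_induction with
  | mem x hx =>
    obtain ⟨ℓ, hs, hb, hn, rfl⟩ := hx
    exact subset_span ⟨b :: ℓ, hs.cons hb, by simpa using hb, by simpa using hn, by simp⟩
  | zero => simp
  | add x y _ _ hx hy => rw [mul_add]; exact add_mem hx hy
  | smul c x _ hx => rw [mul_smul_comm]; exact smul_mem _ c hx

theorem sortedSpan_eq_bot [Fintype L] {D : L → ℕ} (hD : ∀ a, ε a ^ D a = 0) {n : ℕ} (β : L)
    (hn : ∑ a, D a * w a < n) : sortedSpan k ε w n β = ⊥ := by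
  classical
  refine span_eq_bot.2 ?_
  rintro _ ⟨ℓ, hs, -, hnℓ, rfl⟩
  obtain ⟨a, ha⟩ : ∃ a, D a ≤ ℓ.count a := by
    by_contra! h
    have : (ℓ.map w).sum ≤ ∑ a, D a * w a := calc
      (ℓ.map w).sum = ∑ a ∈ ℓ.toFinset, ℓ.count a * w a := Finset.sum_list_map_count ℓ w
      _ ≤ ∑ a ∈ ℓ.toFinset, D a * w a := Finset.sum_le_sum fun a _ => by gcongr; exact (h a).le
      _ ≤ ∑ a, D a * w a := Finset.sum_le_sum_of_subset (Finset.subset_univ _)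
    omega
  rw [hs.eq_filter_append_replicate_append a]
  simp [List.prod_append, pow_eq_zero_of_le ha (hD a)]

end SortedSpan

section Straightening

variable {k B L : Type*} [CommSemiring k] [Ring B] [Algebra k B] [LinearOrder L]
  {ε : L → B} {w : L → ℕ} (hpos : ∀ a, 0 < w a) (hw : Monotone w)
  (hbr : ∀ a b, ε a * ε b - ε b * ε a ∈ span k (ε '' {c | w c = w a + w b}))
include hpos hw hbr

theorem mul_prod_mem_sortedSpan {s : List L} (hs : s.Pairwise (· ≤ ·)) {a β : L} (hβa : β ≤ a)
    (hβs : ∀ x ∈ s, β ≤ x) :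
    ε a * (s.map ε).prod ∈ sortedSpan k ε w (w a + (s.map w).sum) β := by
  induction s generalizing a β with
  | nil => exact subset_span ⟨[a], by simp, by simpa, by simp, by simp⟩
  | cons b s ih =>
    obtain ⟨hbs, hs⟩ := List.pairwise_cons.1 hs
    simp only [List.map_cons, List.prod_cons, List.sum_cons]
    by_cases hab : a ≤ b
    · refine subset_span ⟨a :: b :: s, (hs.cons hbs).cons ?_, ?_, le_rfl, by simp⟩
      · simpa using ⟨hab, fun x hx => hab.trans (hbs x hx)⟩
      · exact List.forall_mem_cons.2 ⟨hβa, hβs⟩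
    have hba : b < a := not_le.1 hab
    have hswap : ε a * (ε b * (s.map ε).prod)
        = ε b * (ε a * (s.map ε).prod) + (ε a * ε b - ε b * ε a) * (s.map ε).prod := by
      noncomm_ring
    rw [hswap]
    refine add_mem ?_ ?_
    · exact sortedSpan_anti (by omega) (hβs b List.mem_cons_self)
        (mul_mem_sortedSpan_self (ih hs hba.le hbs))
    · refine span_le (p := (sortedSpan k ε w _ β).comap (LinearMap.mulRight k _)).2 ?_ (hbr a b)
      rintro _ ⟨c, hc, rfl⟩
      have hac : a < c := hw.reflect_lt (by rw [hc]; have := hpos b; omega)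
      have := ih hs (hβa.trans hac.le) fun x hx => hβs x (List.mem_cons_of_mem b hx)
      rw [hc] at this
      simpa [add_assoc] using this

theorem mul_mem_sortedSpan {a β : L} (hβa : β ≤ a) {n : ℕ} {x : B}
    (hx : x ∈ sortedSpan k ε w n β) : ε a * x ∈ sortedSpan k ε w (w a + n) β := by
  induction hx using span_induction with
  | mem x hx =>
    obtain ⟨ℓ, hs, hβ, hn, rfl⟩ := hx
    exact sortedSpan_anti (by omega) le_rfl (mul_prod_mem_sortedSpan hpos hw hbr hs hβa hβ)
  | zero => simp
  | add x y _ _ hx hy => rw [mul_add]; exact add_mem hx hy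
  | smul c x _ hx => rw [mul_smul_comm]; exact smul_mem _ c hx

theorem prod_mem_sortedSpan {ℓ : List L} {β : L} (hβ : ∀ a ∈ ℓ, β ≤ a) :
    (ℓ.map ε).prod ∈ sortedSpan k ε w (ℓ.map w).sum β := by
  induction ℓ with
  | nil => exact subset_span ⟨[], by simp, by simp, by simp, by simp⟩
  | cons a ℓ ih =>
    simpa using mul_mem_sortedSpan hpos hw hbr (hβ a List.mem_cons_self)
      (ih fun x hx => hβ x (List.mem_cons_of_mem a hx))

theorem exists_prod_eq_zero_of_le_length [Fintype L] (hnil : ∀ a, IsNilpotent (ε a)) :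
    ∃ N, ∀ ℓ : List L, N ≤ ℓ.length → (ℓ.map ε).prod = 0 := by
  choose D hD using hnil
  refine ⟨∑ a, D a * w a + 1, fun ℓ hℓ => ?_⟩
  have hne : ℓ ≠ [] := List.ne_nil_of_length_pos (by omega)
  have hlen : ℓ.length ≤ (ℓ.map w).sum := by
    simpa using List.length_le_sum_of_one_le (ℓ.map w)
      (by simpa using fun a _ => Nat.one_le_of_lt (hpos a))
  have := prod_mem_sortedSpan hpos hw hbr (β := ℓ.min hne) fun a ha => List.min_le_of_mem ha
  rwa [sortedSpan_eq_bot hD _ (by omega), mem_bot] at this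

end Straightening

section WordSpan

variable {k B L : Type*} [CommSemiring k] [Semiring B] [Algebra k B] {ε : L → B}

variable (k ε) in
def wordSpan (r : ℕ) : Submodule k B :=
  span k {x | ∃ ℓ : List L, r ≤ ℓ.length ∧ (ℓ.map ε).prod = x}

theorem wordSpan_anti {r s : ℕ} (h : r ≤ s) : wordSpan k ε s ≤ wordSpan k ε r :=
  span_mono fun _ ⟨ℓ, hℓ, hx⟩ => ⟨ℓ, h.trans hℓ, hx⟩

theorem mul_mem_wordSpan {r s : ℕ} {x y : B} (hx : x ∈ wordSpan k ε r)
    (hy : y ∈ wordSpan k ε s) : x * y ∈ wordSpan k ε (r + s) := by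
  have hxy := Submodule.mul_mem_mul hx hy
  rw [wordSpan, wordSpan, span_mul_span] at hxy
  refine span_mono ?_ hxy
  rintro _ ⟨_, ⟨ℓ, hℓ, rfl⟩, _, ⟨ℓ', hℓ', rfl⟩, rfl⟩
  exact ⟨ℓ ++ ℓ', by simp only [List.length_append]; omega, by simp⟩

end WordSpan

section Unitization

variable {k A L : Type*} [CommRing k] [NonUnitalRing A] [Module k A] [IsScalarTower k A A]
  [SMulCommClass k A A]

theorem Unitization.inr_mulPow (a : A) (n : ℕ) :
    ((mulPow a n : A) : Unitization k A) = (a : Unitization k A) ^ (n + 1) := by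
  induction n with
  | zero => simp [mulPow]
  | succ n ih => rw [mulPow, Unitization.inr_mul, ih, ← pow_succ]

theorem inr_mem_wordSpan_of_adjoin_eq_top {ε : L → A}
    (hgen : NonUnitalAlgebra.adjoin k (range ε) = ⊤) (x : A) :
    (x : Unitization k A) ∈ wordSpan k (fun a => (ε a : Unitization k A)) 1 := by
  induction (hgen ▸ NonUnitalAlgebra.mem_top : x ∈ NonUnitalAlgebra.adjoin k (range ε))
    using NonUnitalAlgebra.adjoin_induction with
  | mem x hx =>
    obtain ⟨a, rfl⟩ := hx
    exact subset_span ⟨[a], le_rfl, by simp⟩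
  | add x y _ _ hx hy => rw [Unitization.inr_add]; exact add_mem hx hy
  | zero => rw [Unitization.inr_zero]; exact zero_mem _
  | mul x y _ _ hx hy =>
    rw [Unitization.inr_mul]
    exact wordSpan_anti (by norm_num) (mul_mem_wordSpan hx hy)
  | smul c x _ hx => rw [Unitization.inr_smul]; exact smul_mem _ c hx

theorem inr_mulList_mem_wordSpan {ε : L → Unitization k A}
    (hA : ∀ y : A, (y : Unitization k A) ∈ wordSpan k ε 1) (l : List A) {r : ℕ} {x : A}
    (hx : (x : Unitization k A) ∈ wordSpan k ε r) :
    ((mulList x l : A) : Unitization k A) ∈ wordSpan k ε (r + l.length) := by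
  induction l generalizing r x with
  | nil => simpa [mulList]
  | cons b l ih =>
    have := ih (r := r + 1) (x := x * b)
      (by rw [Unitization.inr_mul]; exact mul_mem_wordSpan hx (hA b))
    rwa [List.length_cons, ← add_assoc, add_right_comm]

theorem exists_mulList_eq_zero_of_adjoin_eq_top [Fintype L] [LinearOrder L]
    {ε : L → A} {w : L → ℕ} (hpos : ∀ a, 0 < w a) (hw : Monotone w)
    (hbr : ∀ a b, ε a * ε b - ε b * ε a ∈ span k (ε '' {c | w c = w a + w b}))
    (hnil : ∀ a, ∃ d, mulPow (ε a) d = 0) (hgen : NonUnitalAlgebra.adjoin k (range ε) = ⊤) :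
    ∃ d, ∀ f : Fin (d + 1) → A, mulList (f 0) (List.ofFn fun i : Fin d => f i.succ) = 0 := by
  let ι : A →ₗ[k] Unitization k A := Unitization.inrNonUnitalAlgHom k A
  obtain ⟨N, hN⟩ := exists_prod_eq_zero_of_le_length (ε := fun a => (ε a : Unitization k A))
    hpos hw
    (fun a b => by simpa [image_image, ι] using apply_mem_span_image_of_mem_span ι (hbr a b))
    fun a => let ⟨d, hd⟩ := hnil a; ⟨d + 1, by simp [← Unitization.inr_mulPow, hd]⟩
  have hbot : wordSpan k (fun a => (ε a : Unitization k A)) (N + 1) = ⊥ :=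
    span_eq_bot.2 fun _ ⟨ℓ, hℓ, hx⟩ => hx ▸ hN ℓ (by omega)
  refine ⟨N, fun f => Unitization.inr_injective (R := k) ?_⟩
  have := inr_mulList_mem_wordSpan (inr_mem_wordSpan_of_adjoin_eq_top hgen)
    (List.ofFn fun i : Fin N => f i.succ) (inr_mem_wordSpan_of_adjoin_eq_top hgen (f 0))
  rwa [List.length_ofFn, add_comm, hbot, mem_bot, ← Unitization.inr_zero k] at this

end Unitization

section LowerCentralSeries

variable {k A : Type*} [Field k] [NonUnitalRing A] [Module k A] {𝔥 : Submodule k A}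

theorem lcs_antitone (hbr : ∀ a ∈ 𝔥, ∀ b ∈ 𝔥, a * b - b * a ∈ 𝔥) : Antitone (lcs 𝔥) := by
  refine antitone_nat_of_succ_le fun n => ?_
  induction n with
  | zero => exact span_le.2 fun _ ⟨a, ha, b, hb, hx⟩ => hx ▸ hbr a ha b hb
  | succ n ih => exact span_mono fun _ ⟨a, ha, b, hb, hx⟩ => ⟨a, ha, b, ih hb, hx⟩

theorem lcs_le_self (hbr : ∀ a ∈ 𝔥, ∀ b ∈ 𝔥, a * b - b * a ∈ 𝔥) (n : ℕ) : lcs 𝔥 n ≤ 𝔥 :=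
  lcs_antitone hbr (Nat.zero_le n)

theorem commutator_mem_lcs_succ {i : ℕ} {a h : A} (ha : a ∈ lcs 𝔥 i) (hh : h ∈ 𝔥) :
    a * h - h * a ∈ lcs 𝔥 (i + 1) := by
  rw [← neg_sub]
  exact neg_mem (subset_span ⟨h, hh, a, ha, rfl⟩)

theorem commutator_mem_lcs [IsScalarTower k A A] [SMulCommClass k A A] {i j : ℕ} {a b : A}
    (ha : a ∈ lcs 𝔥 i) (hb : b ∈ lcs 𝔥 j) : a * b - b * a ∈ lcs 𝔥 (i + j + 1) := by
  induction j generalizing i a b with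
  | zero => exact commutator_mem_lcs_succ ha hb
  | succ j ih =>
    induction hb using span_induction with
    | mem x hx =>
      obtain ⟨h, hh, c, hc, rfl⟩ := hx
      have hjacobi : a * (h * c - c * h) - (h * c - c * h) * a
          = ((a * h - h * a) * c - c * (a * h - h * a))
            + (h * (a * c - c * a) - (a * c - c * a) * h) := by
        noncomm_ring
      rw [hjacobi]
      refine add_mem ?_ (subset_span ⟨h, hh, _, ih ha hc, rfl⟩)
      exact (show i + 1 + j + 1 = i + (j + 1) + 1 by omega) ▸ ih (commutator_mem_lcs_succ ha hh) hc
    | zero => simp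
    | add x y _ _ hx hy =>
      rw [show a * (x + y) - (x + y) * a = (a * x - x * a) + (a * y - y * a) by noncomm_ring]
      exact add_mem hx hy
    | smul c x _ hx =>
      rw [mul_smul_comm, smul_mul_assoc, ← smul_sub]
      exact smul_mem _ c hx

theorem exists_generators_of_lcs_eq_bot (hbr : ∀ a ∈ 𝔥, ∀ b ∈ 𝔥, a * b - b * a ∈ 𝔥)
    [FiniteDimensional k 𝔥] {m : ℕ} (hm : lcs 𝔥 m = ⊥) :
    ∃ (r : Fin m → ℕ) (g : (Σₗ i : Fin m, Fin (r i)) → A),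
      (∀ a, g a ∈ lcs 𝔥 (ofLex a).1) ∧
        ∀ t : ℕ, lcs 𝔥 t ≤ span k (g '' {a | ((ofLex a).1 : ℕ) = t}) := by
  have hfg (i : Fin m) : (lcs 𝔥 i).FG :=
    have := Submodule.finiteDimensional_of_le (lcs_le_self hbr i)
    (fg_iff_finiteDimensional _).2 this
  choose r g hg using fun i => fg_iff_exists_fin_generating_family.1 (hfg i)
  refine ⟨r, fun a => g (ofLex a).1 (ofLex a).2,
    fun a => (hg (ofLex a).1).le (subset_span (mem_range_self _)), fun t => ?_⟩
  rcases lt_or_ge t m with ht | ht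
  · rw [← hg ⟨t, ht⟩]
    exact span_mono (range_subset_iff.2 fun j => ⟨toLex ⟨⟨t, ht⟩, j⟩, rfl, rfl⟩)
  · rw [le_bot_iff.1 ((lcs_antitone hbr ht).trans hm.le)]
    exact bot_le

end LowerCentralSeries

theorem stmt5_general {k A₀ : Type*} [Field k] [NonUnitalRing A₀]
    [Module k A₀] [IsScalarTower k A₀ A₀] [SMulCommClass k A₀ A₀]
    -- 𝔥 is a Lie subalgebra of A₀: a subspace closed under the commutator bracket
    (𝔥 : Submodule k A₀) (hbr : ∀ a ∈ 𝔥, ∀ b ∈ 𝔥, a * b - b * a ∈ 𝔥)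
    -- 𝔥 is finite-dimensional and nilpotent as a Lie algebra
    [FiniteDimensional k 𝔥] (hnilLie : ∃ m : ℕ, lcs 𝔥 m = ⊥)
    -- A₀ is generated by 𝔥 as a non-unital associative algebra
    (hgen : NonUnitalAlgebra.adjoin k (𝔥 : Set A₀) = ⊤)
    -- every element of 𝔥 is nilpotent in A₀
    (hnil : ∀ a ∈ 𝔥, ∃ d : ℕ, mulPow a d = 0) :
    -- then A₀ is nilpotent: every product of d + 1 elements vanishes, for some d
    ∃ d : ℕ, ∀ f : Fin (d + 1) → A₀,
      mulList (f 0) (List.ofFn fun i : Fin d => f i.succ) = 0 := by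
  obtain ⟨m, hm⟩ := hnilLie
  obtain ⟨r, g, hg, hlcs⟩ := exists_generators_of_lcs_eq_bot hbr hm
  refine exists_mulList_eq_zero_of_adjoin_eq_top (k := k) (w := fun a => (ofLex a).1 + 1)
    (fun _ => Nat.succ_pos _) ?_ (fun a b => ?_) (fun a => hnil _ (lcs_le_self hbr _ (hg a))) ?_
  · intro a b hab
    rcases Sigma.Lex.le_def.1 hab with h | ⟨h, -⟩
    · exact Nat.succ_le_succ h.le
    · exact (congrArg (fun i : Fin m => (i : ℕ) + 1) h).le
  · refine span_mono (image_mono fun c hc => ?_) (hlcs _ (commutator_mem_lcs (hg a) (hg b)))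
    simp only [mem_ofPred_eq] at hc ⊢
    omega
  · refine eq_top_iff.2 (hgen ▸ NonUnitalAlgebra.adjoin_le ?_)
    exact (hlcs 0).trans (span_le.2 ((image_subset_range _ _).trans
      (NonUnitalAlgebra.subset_adjoin k)))

theorem stmt5 {k A₀ : Type*} [Field k] [CharZero k] [NonUnitalRing A₀]
    [Module k A₀] [IsScalarTower k A₀ A₀] [SMulCommClass k A₀ A₀]
    -- 𝔥 is a Lie subalgebra of A₀: a subspace closed under the commutator bracket
    (𝔥 : Submodule k A₀) (hbr : ∀ a ∈ 𝔥, ∀ b ∈ 𝔥, a * b - b * a ∈ 𝔥)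
    -- 𝔥 is finite-dimensional and nilpotent as a Lie algebra
    [FiniteDimensional k 𝔥] (hnilLie : ∃ m : ℕ, lcs 𝔥 m = ⊥)
    -- A₀ is generated by 𝔥 as a non-unital associative algebra
    (hgen : NonUnitalAlgebra.adjoin k (𝔥 : Set A₀) = ⊤)
    -- every element of 𝔥 is nilpotent in A₀
    (hnil : ∀ a ∈ 𝔥, ∃ d : ℕ, mulPow a d = 0) :
    -- then A₀ is nilpotent: every product of d + 1 elements vanishes, for some d
    ∃ d : ℕ, ∀ f : Fin (d + 1) → A₀,
      mulList (f 0) (List.ofFn fun i : Fin d => f i.succ) = 0 :=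
  stmt5_general 𝔥 hbr hnilLie hgen hnil
end

section
/- Let B be a complex unital Banach algebra with norm ‖·‖, let V be a complex linear subspace of B, and suppose there exists d ∈ ℕ such that (e^b − 1)^d = 0 for every b ∈ V. Then there exist constants C > 0 and α > 0 such that ‖e^b‖ ≤ C(1 + ‖b‖)^α for every b ∈ V. -/
/-!
Rescale `b ∈ V` to `x = b / k` with `k ≈ ‖b‖`, so that `‖x‖ ≤ 1` and hence `‖exp x - 1‖ ≤ 2`.
Since `N = exp x - 1` is nilpotent of order `d`, the binomial expansion of
`exp b = (1 + N) ^ k` has at most `d` nonzero terms `k.choose m • N ^ m`, each of size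
`O(k ^ d)`; this gives polynomial growth in `‖b‖`.
-/

open Finset NormedSpace

theorem one_add_pow_eq_sum_range_of_pow_eq_zero {R : Type*} [Semiring R] {N : R} {d : ℕ}
    (hN : N ^ d = 0) (k : ℕ) : (1 + N) ^ k = ∑ m ∈ range d, k.choose m • N ^ m := by
  have hvanish : ∀ m, d ≤ m ∨ k < m → k.choose m • N ^ m = 0 := by
    rintro m (hm | hm)
    · rw [pow_eq_zero_of_le hm hN, smul_zero]
    · rw [Nat.choose_eq_zero_of_lt hm, zero_smul]
  rw [add_comm, (Commute.one_right N).add_pow]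
  simp only [one_pow, mul_one, ← nsmul_eq_mul']
  calc ∑ m ∈ range (k + 1), k.choose m • N ^ m
      = ∑ m ∈ range (max (k + 1) d), k.choose m • N ^ m :=
        sum_subset (range_subset_range.2 (le_max_left _ _)) fun m _ hm ↦
          hvanish m (by simp only [mem_range, not_lt] at hm; omega)
    _ = ∑ m ∈ range d, k.choose m • N ^ m :=
        (sum_subset (range_subset_range.2 (le_max_right _ _)) fun m _ hm ↦
          hvanish m (by simp only [mem_range, not_lt] at hm; omega)).symm

theorem norm_pow_le_norm_one_add {R : Type*} [SeminormedRing R] (x : R) (m : ℕ) :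
    ‖x ^ m‖ ≤ ‖(1 : R)‖ + ‖x‖ ^ m := by
  rcases m.eq_zero_or_pos with rfl | hm
  · simp
  · exact (norm_pow_le' x hm).trans (le_add_of_nonneg_left (norm_nonneg _))

theorem norm_one_add_pow_le_of_pow_eq_zero {R : Type*} [SeminormedRing R] {N : R} {d : ℕ}
    (hN : N ^ d = 0) {r : ℝ} (hr₁ : 1 ≤ r) (hr : ‖N‖ ≤ r) (k : ℕ) :
    ‖(1 + N) ^ k‖ ≤ d * ((k + 1) ^ d * (‖(1 : R)‖ + r ^ d)) := by
  rw [one_add_pow_eq_sum_range_of_pow_eq_zero hN]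
  calc ‖∑ m ∈ range d, k.choose m • N ^ m‖ ≤ ∑ m ∈ range d, ‖k.choose m • N ^ m‖ :=
        norm_sum_le _ _
    _ ≤ ∑ _m ∈ range d, (k + 1 : ℝ) ^ d * (‖(1 : R)‖ + r ^ d) := sum_le_sum fun m hm ↦ ?_
    _ = d * ((k + 1) ^ d * (‖(1 : R)‖ + r ^ d)) := by simp
  have hmd : m ≤ d := (mem_range.1 hm).le
  have hchoose : (k.choose m : ℝ) ≤ (k + 1) ^ d :=
    calc (k.choose m : ℝ) ≤ (k : ℝ) ^ m := by exact_mod_cast Nat.choose_le_pow k m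
      _ ≤ (k + 1) ^ m := by gcongr; linarith
      _ ≤ (k + 1) ^ d := pow_le_pow_right₀ (by linarith [k.cast_nonneg (α := ℝ)]) hmd
  have hpow : ‖N ^ m‖ ≤ ‖(1 : R)‖ + r ^ d :=
    calc ‖N ^ m‖ ≤ ‖(1 : R)‖ + ‖N‖ ^ m := norm_pow_le_norm_one_add N m
      _ ≤ ‖(1 : R)‖ + r ^ m := by gcongr
      _ ≤ ‖(1 : R)‖ + r ^ d := by gcongr
  calc ‖k.choose m • N ^ m‖ ≤ k.choose m * ‖N ^ m‖ := norm_nsmul_le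
    _ ≤ (k + 1 : ℝ) ^ d * (‖(1 : R)‖ + r ^ d) := by gcongr

theorem norm_exp_sub_one_le {𝔸 : Type*} [NormedRing 𝔸] [NormedAlgebra ℚ 𝔸] [CompleteSpace 𝔸]
    (x : 𝔸) : ‖exp x - 1‖ ≤ Real.exp ‖x‖ - 1 := by
  have hx := (hasSum_nat_add_iff' 1).mpr (exp_series_hasSum_exp' (𝕂 := ℚ) x)
  have hr := (hasSum_nat_add_iff' 1).mpr (expSeries_div_hasSum_exp ‖x‖)
  simp only [range_one, sum_singleton, pow_zero, Nat.factorial_zero, Nat.cast_one, inv_one,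
    one_smul, div_one, ← Real.exp_eq_exp_ℝ] at hx hr
  refine hx.norm_le_of_bounded hr fun n ↦ ?_
  rw [norm_smul, norm_inv, ← Rat.norm_cast_real, Rat.cast_natCast, Real.norm_natCast,
    div_eq_inv_mul]
  gcongr
  exact norm_pow_le' x n.succ_pos

theorem norm_exp_nsmul_le_of_pow_exp_sub_one_eq_zero {𝔸 : Type*} [NormedRing 𝔸]
    [NormedAlgebra ℚ 𝔸] [CompleteSpace 𝔸] {x : 𝔸} {d : ℕ} (hx : ‖x‖ ≤ 1)
    (hd : (exp x - 1) ^ d = 0) (k : ℕ) :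
    ‖exp (k • x)‖ ≤ d * ((k + 1) ^ d * (‖(1 : 𝔸)‖ + 2 ^ d)) := by
  have hN : ‖exp x - 1‖ ≤ 2 :=
    calc ‖exp x - 1‖ ≤ Real.exp ‖x‖ - 1 := norm_exp_sub_one_le x
      _ ≤ Real.exp 1 - 1 := by gcongr
      _ ≤ 2 := by linarith [Real.exp_one_lt_d9]
  rw [exp_nsmul, ← add_sub_cancel (1 : 𝔸) (exp x)]
  exact norm_one_add_pow_le_of_pow_eq_zero hd one_le_two hN k

theorem exists_nsmul_natCast_inv_smul_eq {𝕜 E : Type*} [RCLike 𝕜] [NormedAddCommGroup E]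
    [NormedSpace 𝕜 E] (b : E) :
    ∃ k : ℕ, (k : ℝ) ≤ ‖b‖ + 1 ∧ ‖(k : 𝕜)⁻¹ • b‖ ≤ 1 ∧ k • (k : 𝕜)⁻¹ • b = b := by
  refine ⟨⌈‖b‖⌉₊, (Nat.ceil_lt_add_one (norm_nonneg b)).le, ?_⟩
  rcases eq_or_ne b 0 with rfl | hb
  · simp
  have hk : (0 : ℝ) < ⌈‖b‖⌉₊ := Nat.cast_pos.2 (Nat.ceil_pos.2 (norm_pos_iff.2 hb))
  constructor
  · rw [norm_smul, norm_inv, RCLike.norm_natCast, inv_mul_le_one₀ hk]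
    exact Nat.le_ceil _
  · rw [← Nat.cast_smul_eq_nsmul 𝕜, smul_smul, mul_inv_cancel₀ (by exact_mod_cast hk.ne'),
      one_smul]

open NormedSpace in
theorem stmt10 {B : Type*} [NormedRing B] [NormedAlgebra ℂ B] [CompleteSpace B]
    (V : Submodule ℂ B) (d : ℕ) (h : ∀ b ∈ V, (exp b - 1) ^ d = 0) :
    ∃ C > (0 : ℝ), ∃ α > (0 : ℝ), ∀ b ∈ V, ‖exp b‖ ≤ C * (1 + ‖b‖) ^ α := by
  let : NormedAlgebra ℚ B := NormedAlgebra.restrictScalars ℚ ℂ B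
  -- Passing from `d` to `d + 1` keeps the constants positive even when `d = 0`.
  have h' : ∀ b ∈ V, (exp b - 1) ^ (d + 1) = 0 := fun b hb ↦ by rw [pow_succ, h b hb, zero_mul]
  refine ⟨(d + 1) * (2 ^ (d + 1) * (‖(1 : B)‖ + 2 ^ (d + 1))), by positivity,
    ((d + 1 : ℕ) : ℝ), by positivity, fun b hb ↦ ?_⟩
  obtain ⟨k, hkb, hx, hkx⟩ := exists_nsmul_natCast_inv_smul_eq (𝕜 := ℂ) b
  rw [Real.rpow_natCast]
  calc ‖exp b‖ = ‖exp (k • (k : ℂ)⁻¹ • b)‖ := by rw [hkx]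
    _ ≤ (d + 1 : ℕ) * ((k + 1) ^ (d + 1) * (‖(1 : B)‖ + 2 ^ (d + 1))) :=
        norm_exp_nsmul_le_of_pow_exp_sub_one_eq_zero hx (h' _ (V.smul_mem _ hb)) k
    _ ≤ (d + 1 : ℕ) * ((2 * (1 + ‖b‖)) ^ (d + 1) * (‖(1 : B)‖ + 2 ^ (d + 1))) := by
        gcongr
        linarith [norm_nonneg b]
    _ = (d + 1) * (2 ^ (d + 1) * (‖(1 : B)‖ + 2 ^ (d + 1))) * (1 + ‖b‖) ^ (d + 1) := by
        rw [mul_pow]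
        push_cast
        ring
end

section
/- Let 𝔤 be the 2-dimensional non-abelian complex Lie algebra (with basis e₁, e₂ satisfying [e₁, e₂] = e₂). Then for every complex unital Banach algebra B and every unital algebra homomorphism θ : U(𝔤) → B with dense range, B is a PI-algebra. -/
/-!
Put `a = θ e₀` and `b = θ e₁`. From `[a, b] = b` one gets `[a, bᵏ] = k bᵏ`, hence
`k ‖bᵏ‖ ≤ 2 ‖a‖ ‖bᵏ‖`, so `b` is nilpotent, say `bᴺ = 0`. In `U(𝔤)` every bracket of `𝔤` is a
multiple of `e₁`, so `e₁ U(𝔤) ⊆ U(𝔤) e₁` and every commutator `uv - vu` lies in `U(𝔤) e₁`; thus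
`(uv - vu)ᴺ ∈ U(𝔤) e₁ᴺ` is killed by `θ`. By density of the range of `θ`, `(xy - yx)ᴺ = 0` on all
of `B`, and `(X₀X₁ - X₁X₀)ᴺ` is a nonzero noncommutative polynomial: its value at
`(d/dX, X ·)` on `ℂ[X]` is `1`.
-/

/-- An associative unital algebra `A` over `R` satisfies a polynomial identity if there is a
nonzero noncommutative polynomial vanishing under every evaluation in `A`. -/
def IsPIAlgebra (R A : Type*) [CommSemiring R] [Semiring A] [Algebra R A] : Prop :=
  ∃ (n : ℕ) (p : FreeAlgebra R (Fin n)), p ≠ 0 ∧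
    ∀ f : Fin n → A, FreeAlgebra.lift R f p = 0

lemma mul_pow_sub_pow_mul_of_mul_sub_mul_eq_self {A : Type*} [Ring A] {a b : A}
    (h : a * b - b * a = b) (k : ℕ) :
    a * b ^ k - b ^ k * a = k • b ^ k := by
  induction k with
  | zero => simp
  | succ k ih =>
    calc a * b ^ (k + 1) - b ^ (k + 1) * a
        = (a * b ^ k - b ^ k * a) * b + b ^ k * (a * b - b * a) := by noncomm_ring
      _ = (k + 1) • b ^ (k + 1) := by rw [ih, h, smul_mul_assoc, ← pow_succ, succ_nsmul]

lemma isNilpotent_of_mul_sub_mul_eq_self {𝕜 B : Type*} [RCLike 𝕜] [NormedRing B]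
    [NormedSpace 𝕜 B] {a b : B} (h : a * b - b * a = b) : IsNilpotent b := by
  obtain ⟨k, hk⟩ := exists_nat_gt (2 * ‖a‖)
  refine ⟨k, by_contra fun hne => hk.not_ge ?_⟩
  have hpos : 0 < ‖b ^ k‖ := norm_pos_iff.2 hne
  have : k * ‖b ^ k‖ ≤ 2 * ‖a‖ * ‖b ^ k‖ :=
    calc k * ‖b ^ k‖ = ‖a * b ^ k - b ^ k * a‖ := by
          rw [mul_pow_sub_pow_mul_of_mul_sub_mul_eq_self h, RCLike.norm_nsmul 𝕜, nsmul_eq_mul]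
      _ ≤ ‖a‖ * ‖b ^ k‖ + ‖b ^ k‖ * ‖a‖ :=
          (norm_sub_le _ _).trans (add_le_add (norm_mul_le _ _) (norm_mul_le _ _))
      _ = 2 * ‖a‖ * ‖b ^ k‖ := by ring
  exact le_of_mul_le_mul_right this hpos

namespace FreeAlgebra

variable {R : Type*} [CommRing R] [Nontrivial R]

lemma commutator_pow_ne_zero (n : ℕ) :
    (ι R 0 * ι R 1 - ι R 1 * ι R 0 : FreeAlgebra R (Fin 2)) ^ n ≠ 0 := by
  let D : Module.End R (Polynomial R) := Polynomial.derivative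
  let M : Module.End R (Polynomial R) := LinearMap.mulLeft R Polynomial.X
  have hDM : D * M - M * D = 1 := by
    refine LinearMap.ext fun q => ?_
    simp [D, M, Polynomial.derivative_mul]
  have hval : lift R ![D, M] ((ι R 0 * ι R 1 - ι R 1 * ι R 0) ^ n) = 1 := by simp [hDM]
  intro h
  rw [h, map_zero] at hval
  exact zero_ne_one hval

end FreeAlgebra

lemma isPIAlgebra_of_commutator_pow_eq_zero {R A : Type*} [CommRing R] [Nontrivial R] [Ring A]
    [Algebra R A] {n : ℕ} (h : ∀ x y : A, (x * y - y * x) ^ n = 0) : IsPIAlgebra R A :=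
  ⟨2, _, FreeAlgebra.commutator_pow_ne_zero n, fun f => by simpa using h (f 0) (f 1)⟩

lemma lie_mem_span_lie_of_basis_fin_two {R L : Type*} [CommRing R] [LieRing L] [LieAlgebra R L]
    (e : Module.Basis (Fin 2) R L) (g h : L) : ⁅g, h⁆ ∈ R ∙ ⁅e 0, e 1⁆ := by
  rw [← e.sum_repr g, ← e.sum_repr h]
  simp only [Fin.sum_univ_two, add_lie, lie_add, smul_lie, lie_smul, lie_self, ← lie_skew (e 1)]
  exact Submodule.mem_span_singleton.2
    ⟨e.repr h 1 * e.repr g 0 - e.repr h 0 * e.repr g 1, by module⟩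

namespace Ideal

variable {A : Type*} [Ring A] {b x y : A}

lemma mul_mem_span_singleton_of_mul_mem (hx : x ∈ span {b}) (hy : b * y ∈ span {b}) :
    x * y ∈ span {b} := by
  obtain ⟨t, rfl⟩ := mem_span_singleton'.1 hx
  rw [mul_assoc]
  exact mul_mem_left _ t hy

lemma pow_mem_span_singleton_pow (hb : ∀ y, b * y ∈ span {b}) (hx : x ∈ span {b}) (n : ℕ) :
    x ^ n ∈ span {b ^ n} := by
  induction n with
  | zero => simp
  | succ n ih =>
    obtain ⟨s, rfl⟩ := mem_span_singleton'.1 hx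
    obtain ⟨t, ht⟩ := mem_span_singleton'.1 ih
    obtain ⟨u, hu⟩ := mem_span_singleton'.1 (hb t)
    refine mem_span_singleton'.2 ⟨s * u, ?_⟩
    calc s * u * b ^ (n + 1) = s * (u * b) * b ^ n := by simp only [pow_succ', mul_assoc]
      _ = s * b * (t * b ^ n) := by simp only [hu, mul_assoc]
      _ = (s * b) ^ (n + 1) := by rw [ht, pow_succ']

variable {R : Type*} [CommRing R] [Algebra R A] {s : Set A}

lemma mul_mem_span_singleton_of_adjoin_eq_top (hs : Algebra.adjoin R s = ⊤)
    (hb : ∀ y ∈ s, b * y ∈ span {b}) (y : A) : b * y ∈ span {b} := by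
  induction (hs ▸ Algebra.mem_top : y ∈ Algebra.adjoin R s) using Algebra.adjoin_induction with
  | mem y hy => exact hb y hy
  | algebraMap r =>
    rw [← Algebra.commutes]
    exact mul_mem_left _ _ (mem_span_singleton_self b)
  | add y z _ _ hy hz => rw [mul_add]; exact add_mem hy hz
  | mul y z _ _ hy hz => rw [← mul_assoc]; exact mul_mem_span_singleton_of_mul_mem hy hz

lemma mul_sub_mul_mem_span_singleton_of_adjoin_eq_top' (hs : Algebra.adjoin R s = ⊤)
    (hb : ∀ y, b * y ∈ span {b}) (hx : ∀ y ∈ s, x * y - y * x ∈ span {b}) (y : A) :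
    x * y - y * x ∈ span {b} := by
  induction (hs ▸ Algebra.mem_top : y ∈ Algebra.adjoin R s) using Algebra.adjoin_induction with
  | mem y hy => exact hx y hy
  | algebraMap r => simp [Algebra.commutes]
  | add y z _ _ hy hz =>
    rw [show x * (y + z) - (y + z) * x = (x * y - y * x) + (x * z - z * x) by noncomm_ring]
    exact add_mem hy hz
  | mul y z _ _ hy hz =>
    rw [show x * (y * z) - y * z * x = (x * y - y * x) * z + y * (x * z - z * x) by noncomm_ring]
    exact add_mem (mul_mem_span_singleton_of_mul_mem hy (hb z)) (mul_mem_left _ y hz)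

lemma mul_sub_mul_mem_span_singleton_of_adjoin_eq_top (hs : Algebra.adjoin R s = ⊤)
    (hb : ∀ y, b * y ∈ span {b}) (hcomm : ∀ x ∈ s, ∀ y ∈ s, x * y - y * x ∈ span {b}) (x y : A) :
    x * y - y * x ∈ span {b} := by
  refine mul_sub_mul_mem_span_singleton_of_adjoin_eq_top' hs hb (fun z hz => ?_) y
  rw [← neg_sub]
  exact neg_mem (mul_sub_mul_mem_span_singleton_of_adjoin_eq_top' hs hb (hcomm z hz) x)

end Ideal

namespace UniversalEnvelopingAlgebra

attribute [local instance 100] LieRing.ofAssociativeRing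

variable {R L : Type*} [CommRing R] [LieRing L] [LieAlgebra R L]

lemma adjoin_range_ι : Algebra.adjoin R (Set.range (ι R : L →ₗ⁅R⁆ _)) = ⊤ := by
  rw [show Set.range (ι R : L →ₗ⁅R⁆ _) = mkAlgHom R L '' Set.range (TensorAlgebra.ι R) by
      rw [← Set.range_comp]; rfl,
    Algebra.adjoin_image, TensorAlgebra.adjoin_range_ι, Algebra.map_top,
    AlgHom.range_eq_top]
  exact RingCon.mkₐ_surjective _

lemma ι_mul_sub_mul_ι (x y : L) : ι R x * ι R y - ι R y * ι R x = ι R ⁅x, y⁆ := by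
  rw [LieHom.map_lie, Ring.lie_def]

lemma ι_mem_span_ι_of_mem_span {b x : L} (hx : x ∈ R ∙ b) : ι R x ∈ Ideal.span {ι R b} := by
  obtain ⟨c, rfl⟩ := Submodule.mem_span_singleton.1 hx
  rw [map_smul, Algebra.smul_def]
  exact Ideal.mul_mem_left _ _ (Ideal.mem_span_singleton_self _)

variable {b : L}

lemma ι_mul_mem_span_ι (hb : ∀ x y : L, ⁅x, y⁆ ∈ R ∙ b) (u : UniversalEnvelopingAlgebra R L) :
    ι R b * u ∈ Ideal.span {ι R b} := by
  refine Ideal.mul_mem_span_singleton_of_adjoin_eq_top adjoin_range_ι ?_ u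
  rintro _ ⟨x, rfl⟩
  rw [← sub_sub_cancel (ι R x * ι R b) (ι R b * ι R x), ι_mul_sub_mul_ι]
  exact sub_mem (Ideal.mul_mem_left _ _ (Ideal.mem_span_singleton_self _))
    (ι_mem_span_ι_of_mem_span (hb x b))

lemma mul_sub_mul_mem_span_ι (hb : ∀ x y : L, ⁅x, y⁆ ∈ R ∙ b)
    (u v : UniversalEnvelopingAlgebra R L) : u * v - v * u ∈ Ideal.span {ι R b} := by
  refine Ideal.mul_sub_mul_mem_span_singleton_of_adjoin_eq_top adjoin_range_ι
    (ι_mul_mem_span_ι hb) ?_ u v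
  rintro _ ⟨x, rfl⟩ _ ⟨y, rfl⟩
  rw [ι_mul_sub_mul_ι]
  exact ι_mem_span_ι_of_mem_span (hb x y)

end UniversalEnvelopingAlgebra

open UniversalEnvelopingAlgebra in
theorem stmt15_general {𝔤 : Type*} [LieRing 𝔤] [LieAlgebra ℂ 𝔤]
    -- 𝔤 is the 2-dimensional non-abelian complex Lie algebra:
    -- it has a basis e₀, e₁ with ⁅e₀, e₁⁆ = e₁
    (e : Module.Basis (Fin 2) ℂ 𝔤) (he : ⁅e 0, e 1⁆ = e 1)
    (B : Type*) [NormedRing B] [NormedAlgebra ℂ B]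
    (θ : UniversalEnvelopingAlgebra ℂ 𝔤 →ₐ[ℂ] B) (hθ : DenseRange θ) :
    IsPIAlgebra ℂ B := by
  have hder : ∀ g h : 𝔤, ⁅g, h⁆ ∈ ℂ ∙ e 1 := fun g h =>
    he ▸ lie_mem_span_lie_of_basis_fin_two e g h
  obtain ⟨N, hN⟩ : IsNilpotent (θ (ι ℂ (e 1))) := by
    refine isNilpotent_of_mul_sub_mul_eq_self (𝕜 := ℂ) (a := θ (ι ℂ (e 0))) ?_
    simpa [he] using congrArg θ (ι_mul_sub_mul_ι (e 0) (e 1))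
  have hU : ∀ u v, θ ((u * v - v * u) ^ N) = 0 := fun u v => by
    obtain ⟨t, ht⟩ := Ideal.mem_span_singleton'.1 <|
      Ideal.pow_mem_span_singleton_pow (ι_mul_mem_span_ι hder) (mul_sub_mul_mem_span_ι hder u v) N
    rw [← ht, map_mul, map_pow, hN, mul_zero]
  refine isPIAlgebra_of_commutator_pow_eq_zero (R := ℂ) (n := N) fun x y => ?_
  induction x, y using hθ.induction_on₂ with
  | hp => exact isClosed_eq (by fun_prop) continuous_const
  | h u v => simpa using hU u v

theorem stmt15 {𝔤 : Type*} [LieRing 𝔤] [LieAlgebra ℂ 𝔤]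
    -- 𝔤 is the 2-dimensional non-abelian complex Lie algebra:
    -- it has a basis e₀, e₁ with ⁅e₀, e₁⁆ = e₁
    (e : Module.Basis (Fin 2) ℂ 𝔤) (he : ⁅e 0, e 1⁆ = e 1)
    (B : Type*) [NormedRing B] [NormedAlgebra ℂ B] [CompleteSpace B]
    (θ : UniversalEnvelopingAlgebra ℂ 𝔤 →ₐ[ℂ] B) (hθ : DenseRange θ) :
    IsPIAlgebra ℂ B :=
  stmt15_general e he B θ hθ
end
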